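/- arXiv:2412.16261 — 2 statements merged into one kernel-verified Lean document; each statement's English description precedes it below -/
import Mathlib

section
/- Let λ > 0 and let θ, π be real constants with 0 < π < θ. Then for all t ≥ 0, the function f(t) = 1 + (π/(θ − π))·exp(−λθt) − (θ/(θ − π))·exp(−λπt) satisfies 0 ≤ f(t) ≤ 1. -/
open Real

/-! Both bounds compare `exp` at the points `p * x` and `θ * x`. The lower bound `0 ≤ f` is convexity
of `exp`: `p * x` lies between `0` and `θ * x` with weight `p / θ`, so `exp (p * x)` is below the chord.
The upper bound `f ≤ 1` is monotonicity of `exp`, since `θ * x ≤ p * x` for `x = -λ t ≤ 0`. -/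

lemma mul_exp_mul_le_mul_exp_mul_add_sub {p θ : ℝ} (hp : 0 ≤ p) (hpθ : p ≤ θ) (x : ℝ) :
    θ * exp (p * x) ≤ p * exp (θ * x) + (θ - p) := by
  rcases (hp.trans hpθ).eq_or_lt with hθ | hθ
  · obtain rfl : p = 0 := le_antisymm (hθ ▸ hpθ) hp
    simp [← hθ]
  have hw : 0 ≤ p / θ := div_nonneg hp hθ.le
  have hw' : 0 ≤ 1 - p / θ := sub_nonneg.2 ((div_le_one hθ).2 hpθ)
  have hconv := convexOn_exp.2 (Set.mem_univ (θ * x)) (Set.mem_univ 0) hw hw' (by ring)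
  have hpt : p / θ * (θ * x) + (1 - p / θ) * 0 = p * x := by field_simp; ring
  rw [smul_eq_mul, smul_eq_mul, hpt, smul_eq_mul, smul_eq_mul, exp_zero] at hconv
  calc θ * exp (p * x) ≤ θ * (p / θ * exp (θ * x) + (1 - p / θ) * 1) := by gcongr
    _ = p * exp (θ * x) + (θ - p) := by field_simp

lemma mul_exp_mul_le_mul_exp_mul_of_nonpos {p θ : ℝ} (hp : 0 ≤ p) (hpθ : p ≤ θ) {x : ℝ}
    (hx : x ≤ 0) : p * exp (θ * x) ≤ θ * exp (p * x) :=
  mul_le_mul hpθ (exp_le_exp.2 (mul_le_mul_of_nonpos_right hpθ hx)) (exp_pos _).le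
    (hp.trans hpθ)

theorem short_term_solution_bounds (lam θ p : ℝ) (hlam : 0 < lam) (hp : 0 < p) (hpθ : p < θ) :
    ∀ t : ℝ, 0 ≤ t →
      0 ≤ 1 + (p / (θ - p)) * Real.exp (-(lam * θ * t)) - (θ / (θ - p)) * Real.exp (-(lam * p * t)) ∧
      1 + (p / (θ - p)) * Real.exp (-(lam * θ * t)) - (θ / (θ - p)) * Real.exp (-(lam * p * t)) ≤ 1 := by
  intro t ht
  have hθp : 0 < θ - p := sub_pos.2 hpθ
  rw [show -(lam * θ * t) = θ * -(lam * t) by ring, show -(lam * p * t) = p * -(lam * t) by ring]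
  set u := -(lam * t)
  have hu : u ≤ 0 := neg_nonpos.2 (mul_nonneg hlam.le ht)
  have hlower : θ * exp (p * u) ≤ p * exp (θ * u) + (θ - p) :=
    mul_exp_mul_le_mul_exp_mul_add_sub hp.le hpθ.le u
  have hupper : p * exp (θ * u) ≤ θ * exp (p * u) :=
    mul_exp_mul_le_mul_exp_mul_of_nonpos hp.le hpθ.le hu
  have hf : 1 + p / (θ - p) * exp (θ * u) - θ / (θ - p) * exp (p * u)
      = 1 - (θ * exp (p * u) - p * exp (θ * u)) / (θ - p) := by
    ring
  rw [hf]
  exact ⟨sub_nonneg.2 ((div_le_one hθp).2 (by linarith)),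
    sub_le_self _ (div_nonneg (sub_nonneg.2 hupper) hθp.le)⟩
end

section
/- Let λ > 0, θ > 0 and 0 < δ < ν be real constants. Define VO₂ : [0, ν] → ℝ piecewise by VO₂(t) = 1 − exp(−λθt) for 0 ≤ t ≤ δ and VO₂(t) = (exp(λθδ) − 1)·exp(−λθt) for δ < t ≤ ν. Then (1/ν)·∫₀^ν VO₂(t) dt = (1/ν)·(δ + (1/(λθ))·exp(−λθν)·(1 − exp(λθδ))) = (1/ν)·(δ − ε), where ε := (exp(−λθν)/(λθ))·(exp(λθδ) − 1). -/
open Real Set intervalIntegral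
open MeasureTheory (volume)

/-! Split the integral at `δ`. Both pieces are elementary exponential integrals, and since
`(exp (k δ) - 1) * exp (-k δ) = 1 - exp (-k δ)` their boundary terms at `δ` cancel, leaving
`δ - exp (-k ν) / k * (exp (k δ) - 1)`. -/

theorem integral_ite_le_eq_add {f g : ℝ → ℝ} {a b c : ℝ} (hac : a ≤ c) (hcb : c ≤ b)
    (hf : IntervalIntegrable f volume a c)
    (hg : IntervalIntegrable g volume c b) :
    ∫ t in a..b, (if t ≤ c then f t else g t) = (∫ t in a..c, f t) + ∫ t in c..b, g t := by
  have hleft : EqOn f (fun t => if t ≤ c then f t else g t) (uIoo a c) := fun t ht => by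
    rw [uIoo_of_le hac] at ht
    simp [ht.2.le]
  have hright : EqOn g (fun t => if t ≤ c then f t else g t) (uIoo c b) := fun t ht => by
    rw [uIoo_of_le hcb] at ht
    simp [ht.1]
  rw [← integral_add_adjacent_intervals (hf.congr_uIoo hleft) (hg.congr_uIoo hright),
    integral_congr_uIoo hleft, integral_congr_uIoo hright]

theorem integral_exp_neg_mul {k : ℝ} (hk : k ≠ 0) (a b : ℝ) :
    ∫ t in a..b, exp (-(k * t)) = (exp (-(k * a)) - exp (-(k * b))) / k := by
  simp only [← neg_mul]
  rw [integral_comp_mul_left (fun t => exp t) (neg_ne_zero.mpr hk), integral_exp, smul_eq_mul]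
  field_simp
  ring

theorem integral_ite_one_sub_exp_neg_mul {k δ ν : ℝ} (hk : k ≠ 0) (hδ : 0 ≤ δ) (hδν : δ ≤ ν) :
    ∫ t in (0:ℝ)..ν, (if t ≤ δ then 1 - exp (-(k * t)) else (exp (k * δ) - 1) * exp (-(k * t))) =
      δ - exp (-(k * ν)) / k * (exp (k * δ) - 1) := by
  have hexp (a b : ℝ) : IntervalIntegrable (fun t => exp (-(k * t))) volume a b :=
    (by fun_prop : Continuous fun t => exp (-(k * t))).intervalIntegrable a b
  rw [integral_ite_le_eq_add hδ hδν (intervalIntegrable_const.sub (hexp 0 δ))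
    ((hexp δ ν).const_mul _), integral_sub intervalIntegrable_const (hexp 0 δ),
    integral_const_mul, integral_exp_neg_mul hk, integral_exp_neg_mul hk]
  simp only [integral_const, smul_eq_mul, sub_zero, mul_one, mul_zero, neg_zero, exp_zero,
    exp_neg (k * δ)]
  field_simp
  ring

theorem vo2_homogenized_average (lam θ δ ν : ℝ) (hlam : 0 < lam) (hθ : 0 < θ)
    (hδ : 0 < δ) (hδν : δ < ν) :
    let VO₂ : ℝ → ℝ := fun t =>
      if t ≤ δ then 1 - Real.exp (-(lam * θ * t))
      else (Real.exp (lam * θ * δ) - 1) * Real.exp (-(lam * θ * t))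
    let ε : ℝ := (Real.exp (-(lam * θ * ν)) / (lam * θ)) * (Real.exp (lam * θ * δ) - 1)
    (1 / ν) * ∫ t in (0:ℝ)..ν, VO₂ t =
      (1 / ν) * (δ + (1 / (lam * θ)) * Real.exp (-(lam * θ * ν)) * (1 - Real.exp (lam * θ * δ))) ∧
    (1 / ν) * (δ + (1 / (lam * θ)) * Real.exp (-(lam * θ * ν)) * (1 - Real.exp (lam * θ * δ))) =
      (1 / ν) * (δ - ε) := by
  intro VO₂ ε
  refine ⟨?_, by ring⟩
  rw [integral_ite_one_sub_exp_neg_mul (mul_pos hlam hθ).ne' hδ.le hδν.le]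
  ring
end
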